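/- Let (ℒ, 𝒜) be a complete duality pair over a commutative ring R. Then every module in ℒ is right-orthogonal to the Gorenstein (ℒ,𝒜)-projective modules: for every L ∈ ℒ and every Gorenstein (ℒ,𝒜)-projective R-module G, Ext¹_R(G, L) = 0. In particular, Ext¹_R(G, F) = 0 for every flat R-module F. -/

import Mathlib

open CategoryTheory

universe w u

/-- The character module `M⁺ = Hom_ℤ(M, ℚ/ℤ)` of `M`, as an object of `ModuleCat R`
(with the `R`-action `(r • f) x = f (r • x)`). -/
noncomputable def charMod (R : Type u) [CommRing R] (M : ModuleCat.{u} R) : ModuleCat.{u} R :=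
  ModuleCat.of R (CharacterModule M)

/-- `(𝓜, 𝓒)` is a duality pair over `R`: both classes are closed under isomorphism,
`M ∈ 𝓜 ↔ M⁺ ∈ 𝓒`, and `𝓒` is closed under direct summands and finite direct sums. -/
structure IsDualityPair (R : Type u) [CommRing R]
    (Mc Cc : ModuleCat.{u} R → Prop) : Prop where
  isoClosed_fst : ∀ {A B : ModuleCat.{u} R}, (A ≅ B) → Mc A → Mc B
  isoClosed_snd : ∀ {A B : ModuleCat.{u} R}, (A ≅ B) → Cc A → Cc B
  char_mem_iff : ∀ M : ModuleCat.{u} R, Mc M ↔ Cc (charMod R M)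
  summand_closed : ∀ A B : ModuleCat.{u} R, Cc (ModuleCat.of R (A × B)) → Cc A
  finSum_closed : ∀ A B : ModuleCat.{u} R, Cc A → Cc B → Cc (ModuleCat.of R (A × B))

/-- A duality pair `(𝓜, 𝓒)` is perfect if `R ∈ 𝓜` and `𝓜` is closed under arbitrary
direct sums and under extensions. -/
structure IsPerfectDualityPair (R : Type u) [CommRing R]
    (Mc Cc : ModuleCat.{u} R → Prop) extends IsDualityPair R Mc Cc : Prop where
  self_mem : Mc (ModuleCat.of R R)
  directSum_closed : ∀ (ι : Type u) (A : ι → ModuleCat.{u} R),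
    (∀ i, Mc (A i)) → Mc (ModuleCat.of R (DirectSum ι (fun i => A i)))
  extension_closed : ∀ S : ShortComplex (ModuleCat.{u} R),
    S.ShortExact → Mc S.X₁ → Mc S.X₃ → Mc S.X₂

/-- `(ℒ, 𝒜)` is a complete duality pair: `{ℒ, 𝒜}` is a symmetric duality pair
with `(ℒ, 𝒜)` perfect. -/
structure IsCompleteDualityPair (R : Type u) [CommRing R]
    (Lc Ac : ModuleCat.{u} R → Prop) : Prop where
  perfect : IsPerfectDualityPair R Lc Ac
  snd : IsDualityPair R Ac Lc

/-- The complex of abelian groups `Hom_R(X, M)` induced by a chain complex `X`. -/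
noncomputable def homToComplex (R : Type u) [CommRing R]
    (X : ChainComplex (ModuleCat.{u} R) ℤ) (M : ModuleCat.{u} R) :
    HomologicalComplex AddCommGrpCat.{u} (ComplexShape.down ℤ).symm :=
  ((preadditiveYoneda.obj M).mapHomologicalComplex _).obj X.op

/-- A complex is exact if its homology vanishes in every degree. -/
def ComplexExact {V : Type*} [Category V] [Limits.HasZeroMorphisms V] {ι : Type*}
    {c : ComplexShape ι} (X : HomologicalComplex V c) : Prop :=
  ∀ n, X.ExactAt n

/-- `M` is Gorenstein `(ℒ,𝒜)`-projective: `M ≅ Z₀P` for some exact complex `P` of projectives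
such that `Hom_R(P, L)` is exact for all `L ∈ ℒ`. -/
def IsGorensteinProjective (R : Type u) [CommRing R]
    (Lc : ModuleCat.{u} R → Prop) (M : ModuleCat.{u} R) : Prop :=
  ∃ P : ChainComplex (ModuleCat.{u} R) ℤ,
    (∀ n, Projective (P.X n)) ∧ ComplexExact P ∧
      (∀ L, Lc L → ComplexExact (homToComplex R P L)) ∧
      Nonempty (M ≅ P.cycles 0)

/-- The first `Ext` group `Ext¹_R(M, N)` of `R`-modules. -/
noncomputable def ext1 (R : Type u) [CommRing R] (M N : ModuleCat.{u} R) : ModuleCat.{u} R :=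
  ((_root_.Ext R (ModuleCat.{u} R) 1).obj (Opposite.op M)).obj N

/-- `Ext¹_R(M, N) = 0`. -/
def Ext1Vanishes (R : Type u) [CommRing R] (M N : ModuleCat.{u} R) : Prop :=
  Subsingleton (ext1 R M N)

/-!
Truncating `P` below degree `1` gives a projective resolution `P₁ ← P₂ ← ⋯` of `G ≅ Z₀P`, so
`Ext¹(G, L)` is the cohomology of `Hom(P, L)` at `P₂`, which vanishes as soon as `Hom(P, L)` is
exact. A flat module `F` lies in `ℒ`: it is a quotient of a free module `R^(F) ∈ ℒ`, and since
`F⁺` is injective, the dual embedding `F⁺ ↪ (R^(F))⁺` splits, making `F⁺` a direct summand of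
`(R^(F))⁺ ∈ 𝒜`.
-/

open Limits

namespace HomologicalComplex

variable {ι : Type*} {c : ComplexShape ι} {i j k : ι}

lemma exactAt_iff_of_moduleCat {S : Type*} [Ring S] (X : HomologicalComplex (ModuleCat.{u} S) c)
    (hi : c.prev j = i) (hk : c.next j = k) :
    X.ExactAt j ↔ ∀ x : X.X j, X.d j k x = 0 → ∃ y : X.X i, X.d i j y = x := by
  rw [X.exactAt_iff' i j k hi hk, ShortComplex.moduleCat_exact_iff]
  rfl

lemma exactAt_iff_of_addCommGrp (X : HomologicalComplex AddCommGrpCat.{u} c)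
    (hi : c.prev j = i) (hk : c.next j = k) :
    X.ExactAt j ↔ ∀ x : X.X j, X.d j k x = 0 → ∃ y : X.X i, X.d i j y = x := by
  rw [X.exactAt_iff' i j k hi hk, ShortComplex.ab_exact_iff]
  rfl

variable {S : Type*} [Ring S] (X : HomologicalComplex (ModuleCat.{u} S) c)

lemma iCycles_injective [X.HasHomology j] : Function.Injective (X.iCycles j) :=
  (ModuleCat.mono_iff_injective _).mp inferInstance

lemma toCycles_surjective_of_exactAt (hi : c.prev j = i) (hk : c.next j = k) (h : X.ExactAt j) :
    Function.Surjective (X.toCycles i j) := by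
  intro z
  have hz : X.d j k (X.iCycles j z) = 0 := by
    rw [← ConcreteCategory.comp_apply, iCycles_d]
    rfl
  obtain ⟨y, hy⟩ := (X.exactAt_iff_of_moduleCat hi hk).mp h _ hz
  refine ⟨y, X.iCycles_injective ?_⟩
  rw [← ConcreteCategory.comp_apply, toCycles_i, hy]

lemma toCycles_eq_zero_iff (x : X.X i) : X.toCycles i j x = 0 ↔ X.d i j x = 0 := by
  rw [← toCycles_i, ConcreteCategory.comp_apply, ← X.iCycles_injective.eq_iff, map_zero]

end HomologicalComplex

namespace ChainComplex

variable {V : Type*} [Category V] [HasZeroMorphisms V]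

noncomputable def positivePart (P : ChainComplex V ℤ) : ChainComplex V ℕ :=
  of (fun n => P.X (n + 1)) (fun n => P.d (n + 1 + 1) (n + 1)) (fun _ => P.d_comp_d _ _ _)

lemma positivePart_d (P : ChainComplex V ℤ) (n : ℕ) :
    (positivePart P).d (n + 1) n = P.d (n + 1 + 1) (n + 1) :=
  of_d (fun n : ℕ => P.X (n + 1)) (fun n : ℕ => P.d (n + 1 + 1) (n + 1)) n

noncomputable def positivePartToCycles [HasZeroObject V] (P : ChainComplex V ℤ)
    [P.HasHomology 0] : positivePart P ⟶ (single₀ V).obj (P.cycles 0) :=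
  (toSingle₀Equiv _ _).symm ⟨P.toCycles 1 0, by rw [positivePart_d]; exact P.d_toCycles 2 1 0⟩

lemma positivePartToCycles_f_zero [HasZeroObject V] (P : ChainComplex V ℤ) [P.HasHomology 0] :
    (positivePartToCycles P).f 0 = P.toCycles 1 0 :=
  toSingle₀Equiv_symm_apply_f_zero _ _

variable {S : Type*} [Ring S] (P : ChainComplex (ModuleCat.{u} S) ℤ)

lemma positivePart_exactAt_succ (n : ℕ) (hP : P.ExactAt (n + 1 + 1)) :
    (positivePart P).ExactAt (n + 1) := by
  rw [HomologicalComplex.exactAt_iff_of_moduleCat _ (ComplexShape.prev_eq' _ rfl)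
    (ComplexShape.next_eq' _ rfl)]
  intro x hx
  rw [positivePart_d] at hx
  obtain ⟨y, hy⟩ := (P.exactAt_iff_of_moduleCat (ComplexShape.prev_eq' _ rfl)
    (ComplexShape.next_eq' _ rfl)).mp hP x hx
  exact ⟨y, by rw [positivePart_d]; exact hy⟩

lemma quasiIsoAt_positivePartToCycles_zero (hP₀ : P.ExactAt 0) (hP₁ : P.ExactAt 1) :
    QuasiIsoAt (positivePartToCycles P) 0 := by
  rw [quasiIsoAt₀_iff, ShortComplex.quasiIso_iff_of_zeros' _
    ((positivePart P).shape 0 0 (by simp)) rfl rfl]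
  constructor
  · rw [ShortComplex.moduleCat_exact_iff]
    intro (x : P.X 1) hx
    replace hx : P.toCycles 1 0 x = 0 := by rwa [← positivePartToCycles_f_zero]
    rw [HomologicalComplex.toCycles_eq_zero_iff] at hx
    obtain ⟨y, hy⟩ := (P.exactAt_iff_of_moduleCat (i := 2) (k := 0) (by simp) (by simp)).mp
      hP₁ x hx
    exact ⟨y, by change (positivePart P).d 1 0 y = x; rw [positivePart_d]; exact hy⟩
  · have hsurj := P.toCycles_surjective_of_exactAt (i := 1) (k := -1) (by simp) (by simp) hP₀
    rw [← positivePartToCycles_f_zero] at hsurj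
    exact (ModuleCat.epi_iff_surjective _).mpr hsurj

lemma quasiIso_positivePartToCycles (hP : ComplexExact P) : QuasiIso (positivePartToCycles P) where
  quasiIsoAt
    | 0 => quasiIsoAt_positivePartToCycles_zero P (hP 0) (hP 1)
    | n + 1 => (quasiIsoAt_iff_exactAt' _ _ (exactAt_succ_single_obj _ n)).mpr
        (positivePart_exactAt_succ P n (hP _))

end ChainComplex

namespace CategoryTheory.ProjectiveResolution

noncomputable def ofIsoCycles {S : Type*} [Ring S] {G : ModuleCat.{u} S}
    (P : ChainComplex (ModuleCat.{u} S) ℤ) (hproj : ∀ n, Projective (P.X n))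
    (hP : ComplexExact P) (e : G ≅ P.cycles 0) : ProjectiveResolution G where
  complex := P.positivePart
  projective _ := hproj _
  π := P.positivePartToCycles ≫ (ChainComplex.single₀ _).map e.inv
  quasiIso := by
    have := P.quasiIso_positivePartToCycles hP
    infer_instance

lemma ext1Vanishes_of_exactAt {R : Type u} [CommRing R] {G L : ModuleCat.{u} R}
    (Q : ProjectiveResolution G) (h : (Q.complex.linearYonedaObj R L).ExactAt 1) :
    Ext1Vanishes R G L := by
  rw [Ext1Vanishes, ← ModuleCat.isZero_iff_subsingleton]
  exact h.isZero_homology.of_iso (Q.isoExt 1 L)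

end CategoryTheory.ProjectiveResolution

section

variable {R : Type u} [CommRing R]

lemma ChainComplex.linearYonedaObj_positivePart_exactAt_one
    (P : ChainComplex (ModuleCat.{u} R) ℤ) (L : ModuleCat.{u} R)
    (h : (homToComplex R P L).ExactAt 2) :
    (P.positivePart.linearYonedaObj R L).ExactAt 1 := by
  rw [HomologicalComplex.exactAt_iff_of_moduleCat _ (i := 0) (k := 2) (by simp) (by simp)]
  intro (g : P.X 2 ⟶ L) (hg : P.positivePart.d 2 1 ≫ g = 0)
  rw [positivePart_d] at hg
  obtain ⟨f, hf⟩ := ((homToComplex R P L).exactAt_iff_of_addCommGrp (i := 1) (j := 2) (k := 3)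
    (ComplexShape.prev_eq' _ (by rfl)) (ComplexShape.next_eq' _ (by rfl))).mp h g hg
  exact ⟨f, by change P.positivePart.d 1 0 ≫ f = g; rw [positivePart_d]; exact hf⟩

lemma IsGorensteinProjective.ext1Vanishes {Lc : ModuleCat.{u} R → Prop} {G L : ModuleCat.{u} R}
    (hG : IsGorensteinProjective R Lc G) (hL : Lc L) : Ext1Vanishes R G L := by
  obtain ⟨P, hproj, hP, hHom, ⟨e⟩⟩ := hG
  exact (ProjectiveResolution.ofIsoCycles P hproj hP e).ext1Vanishes_of_exactAt
    (P.linearYonedaObj_positivePart_exactAt_one L (hHom L hL 2))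

lemma IsDualityPair.mem_of_surjective {Mc Cc : ModuleCat.{u} R → Prop}
    (h : IsDualityPair R Mc Cc) {N F : ModuleCat.{u} R} (hN : Mc N) (π : N →ₗ[R] F)
    (hπ : Function.Surjective π) (hF : Module.Baer R (CharacterModule F)) : Mc F := by
  let i := CharacterModule.dual π
  obtain ⟨r, hr⟩ := hF.extension_property i (CharacterModule.dual_injective_of_surjective π hπ)
    LinearMap.id
  let e := ((LinearMap.exact_map_mkQ_range i).splitInjectiveEquiv
    (Submodule.mkQ_surjective _) ⟨r, hr⟩).1
  rw [h.char_mem_iff] at hN ⊢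
  exact h.summand_closed (charMod R F) (ModuleCat.of R (_ ⧸ LinearMap.range i))
    (h.isoClosed_snd e.toModuleIso hN)

lemma IsPerfectDualityPair.mem_of_flat {Lc Ac : ModuleCat.{u} R → Prop}
    (h : IsPerfectDualityPair R Lc Ac) (F : ModuleCat.{u} R) [Module.Flat R F] : Lc F := by
  classical
  let π := DirectSum.toModule R F F fun x => LinearMap.toSpanSingleton R F x
  have hπ : Function.Surjective π := fun x =>
    ⟨DirectSum.lof R F (fun _ => R) x 1, by simp [π]⟩
  exact h.mem_of_surjective (h.directSum_closed F (fun _ => ModuleCat.of R R)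
    fun _ => h.self_mem) π hπ (Module.Flat.iff_characterModule_baer.mp inferInstance)

end

/-- For a complete duality pair `(ℒ, 𝒜)`, every module in `ℒ` is right-orthogonal to the
Gorenstein `(ℒ,𝒜)`-projective modules; in particular so is every flat module. -/
theorem ext_vanishes_of_gorensteinProjective_of_mem_L
    (R : Type u) [CommRing R] (Lc Ac : ModuleCat.{u} R → Prop)
    (h : IsCompleteDualityPair R Lc Ac) :
    (∀ L : ModuleCat.{u} R, Lc L → ∀ G : ModuleCat.{u} R,
      IsGorensteinProjective R Lc G → Ext1Vanishes R G L) ∧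
    (∀ G : ModuleCat.{u} R, IsGorensteinProjective R Lc G →
      ∀ F : ModuleCat.{u} R, Module.Flat R F → Ext1Vanishes R G F) := by
  have orthogonal : ∀ L : ModuleCat.{u} R, Lc L → ∀ G : ModuleCat.{u} R,
      IsGorensteinProjective R Lc G → Ext1Vanishes R G L :=
    fun _ hL _ hG => hG.ext1Vanishes hL
  exact ⟨orthogonal, fun G hG F _ => orthogonal F (h.perfect.mem_of_flat F) G hG⟩
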